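/- Let û and v̂ be Fourier-side mild solutions of the Navier–Stokes system with data (û₀, F̂) and (v̂₀, Ĝ) respectively, satisfying sup_{t≥0} ess sup_ξ |ξ|² |û(ξ,t)| < ∞ and sup_{t≥0} ess sup_ξ |ξ|² |v̂(ξ,t)| < ∞. If lim_{t→∞} ess sup_ξ |ξ|² |û(ξ,t) − v̂(ξ,t)| = 0, then lim_{t→∞} ess sup_ξ |ξ|² | e^{−t|ξ|²}(û₀(ξ) − v̂₀(ξ)) + ∫₀ᵗ e^{−(t−τ)|ξ|²} P̂(ξ)( F̂(ξ,τ) − Ĝ(ξ,τ) ) dτ | = 0. -/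

import Mathlib

open MeasureTheory Filter
open scoped ENNReal

noncomputable section

abbrev E3 : Type := EuclideanSpace ℝ (Fin 3)
abbrev V3 : Type := Fin 3 → ℂ

/-- The `PM^a` norm (on the Fourier side): `ess sup_ξ |ξ|^a |g(ξ)|`, valued in `ℝ≥0∞`. -/
def PMnorm (a : ℝ) (g : E3 → V3) : ℝ≥0∞ :=
  essSup (fun ξ : E3 => ENNReal.ofReal (‖ξ‖ ^ a * ‖g ξ‖)) volume

/-- The symbol `P̂(ξ)_{jk} = δ_{jk} − ξ_j ξ_k / |ξ|²` of the Leray projector. -/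
def LerayP (ξ : E3) : Matrix (Fin 3) (Fin 3) ℂ :=
  fun j k => (if j = k then (1 : ℂ) else 0) - ((ξ j : ℂ) * (ξ k : ℂ)) / ((‖ξ‖ : ℂ) ^ 2)

/-- The matrix-valued convolution
`Ŵ[v,w](ξ)_{jk} = (2π)^{-3/2} ∫ v_j(ξ−z) w_k(z) dz`
(the Fourier transform of the tensor product `v ⊗ w`). -/
def Wconv (v w : E3 → V3) (ξ : E3) : Matrix (Fin 3) (Fin 3) ℂ :=
  fun j k => (((2 * Real.pi) ^ ((3 : ℝ) / 2))⁻¹ : ℝ) • ∫ z : E3, v (ξ - z) j * w z k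

/-- The vector `iξ·Ŵ[v,w](ξ)`, with components `Σ_k iξ_k Ŵ[v,w](ξ)_{jk}`. -/
def ixW (v w : E3 → V3) (ξ : E3) : V3 :=
  fun j => ∑ k : Fin 3, Complex.I * (ξ k : ℂ) * Wconv v w ξ j k

/-- The Fourier side of the Navier–Stokes bilinear Duhamel term
`B(u,v)(t) = −∫₀ᵗ S(t−τ) P ∇·(u⊗v) dτ` (up to sign):
`∫₀ᵗ e^{−(t−τ)|ξ|²} P̂(ξ)( iξ·Ŵ[û(τ),v̂(τ)](ξ) ) dτ`. -/
def Bterm (u v : E3 → ℝ → V3) (ξ : E3) (t : ℝ) : V3 :=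
  ∫ τ in (0 : ℝ)..t, Real.exp (-(t - τ) * ‖ξ‖ ^ 2) •
    (LerayP ξ).mulVec (ixW (fun ζ => u ζ τ) (fun ζ => v ζ τ) ξ)

/-- The Fourier side of the Duhamel force term `∫₀ᵗ S(t−τ) P F(τ) dτ`. -/
def Fterm (F : E3 → ℝ → V3) (ξ : E3) (t : ℝ) : V3 :=
  ∫ τ in (0 : ℝ)..t, Real.exp (-(t - τ) * ‖ξ‖ ^ 2) • (LerayP ξ).mulVec (F ξ τ)

/-- `sup_{t ≥ 0} ‖u(t)‖_{PM^a}`. -/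
def supPM (a : ℝ) (u : E3 → ℝ → V3) : ℝ≥0∞ :=
  ⨆ (t : ℝ) (_ : 0 ≤ t), PMnorm a (fun ξ => u ξ t)

/-- A Fourier-side mild solution of the Navier–Stokes system with data `(û₀, F̂)`:
`û` is jointly measurable, all integrals converge absolutely, and for every `t ≥ 0`
and a.e. `ξ`,
`û(ξ,t) = e^{−t|ξ|²} û₀(ξ) − ∫₀ᵗ e^{−(t−τ)|ξ|²} P̂(ξ)(iξ·Ŵ[û(τ),û(τ)](ξ)) dτ
 + ∫₀ᵗ e^{−(t−τ)|ξ|²} P̂(ξ) F̂(ξ,τ) dτ`. -/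
def IsMildSolution (u0 : E3 → V3) (F : E3 → ℝ → V3) (u : E3 → ℝ → V3) : Prop :=
  Measurable (fun p : E3 × ℝ => u p.1 p.2) ∧
  ∀ t : ℝ, 0 ≤ t → ∀ᵐ ξ : E3,
    (∀ τ ∈ Set.Icc (0 : ℝ) t, ∀ j k : Fin 3,
        Integrable (fun z : E3 => u (ξ - z) τ j * u z τ k)) ∧
    IntervalIntegrable (fun τ : ℝ =>
        Real.exp (-(t - τ) * ‖ξ‖ ^ 2) •
          (LerayP ξ).mulVec (ixW (fun ζ => u ζ τ) (fun ζ => u ζ τ) ξ)) volume 0 t ∧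
    IntervalIntegrable (fun τ : ℝ =>
        Real.exp (-(t - τ) * ‖ξ‖ ^ 2) • (LerayP ξ).mulVec (F ξ τ)) volume 0 t ∧
    u ξ t = Real.exp (-t * ‖ξ‖ ^ 2) • u0 ξ - Bterm u u ξ t + Fterm F ξ t

/-- `η` is a constant for which the `PM²` bilinear estimate holds:
`‖B(u,v)(t)‖_{PM²} ≤ η (sup_τ ‖u(τ)‖_{PM²})(sup_τ ‖v(τ)‖_{PM²})`. -/
def BilinearEstimate (η : ℝ) : Prop :=
  ∀ u v : E3 → ℝ → V3,
    Measurable (fun p : E3 × ℝ => u p.1 p.2) →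
    Measurable (fun p : E3 × ℝ => v p.1 p.2) →
    ∀ t : ℝ, 0 ≤ t →
      PMnorm 2 (fun ξ => Bterm u v ξ t) ≤ ENNReal.ofReal η * supPM 2 u * supPM 2 v

/-!
Subtracting the two mild formulations, `S(t)(û₀ - v̂₀) + ∫₀ᵗ S(t-τ) P̂ (F̂ - Ĝ) dτ` equals
`(û - v̂)(t) + B(û,û)(t) - B(v̂,v̂)(t)`, so it suffices that the bilinear difference tends to `0`
in `PM²`. Since `B(û,û) - B(v̂,v̂) = B(û - v̂, û) + B(v̂, û - v̂)` and
`∫ |ξ - z|⁻² |z|⁻² dz = O(|ξ|⁻¹)` in `ℝ³`, the Duhamel integrand at time `τ` is bounded, uniformly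
in `ξ`, by `K h(τ)` with `h(τ) = ‖û(τ) - v̂(τ)‖_{PM²}`, a bounded function tending to `0`. Then
`|ξ|² ∫₀ᵗ e^{-(t-τ)|ξ|²} K h(τ) dτ` is small uniformly in `ξ`: the part `τ ≤ T` is
`O(T / (t - T))` because `x e^{-x} ≤ 1`, and the part `τ ≥ T` is at most `K sup_{τ ≥ T} h(τ)`.
-/

open Metric Set

def invSqBelow (ρ : ℝ) : ℝ → ℝ := (Iio ρ).indicator fun y => (y ^ 2)⁻¹

def invPowFourAbove (ρ : ℝ) : ℝ → ℝ := (Ici ρ).indicator fun y => (y ^ 4)⁻¹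

lemma integral_fun_norm_E3 (f : ℝ → ℝ) :
    ∫ z : E3, f ‖z‖ = 3 * volume.real (ball (0 : E3) 1) * ∫ y in Ioi (0 : ℝ), y ^ 2 * f y := by
  rw [integral_fun_norm_addHaar, finrank_euclideanSpace_fin]
  simp [smul_eq_mul, mul_assoc]

lemma integrable_fun_norm_E3 {f : ℝ → ℝ} (hf : IntegrableOn (fun y => y ^ 2 * f y) (Ioi 0)) :
    Integrable (fun z : E3 => f ‖z‖) := by
  rw [integrable_fun_norm_addHaar, finrank_euclideanSpace_fin]
  simpa using hf

lemma sq_mul_invSqBelow_eqOn (ρ : ℝ) :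
    EqOn (fun y => y ^ 2 * invSqBelow ρ y) ((Ioo 0 ρ).indicator 1) (Ioi 0) := by
  intro y (hy : 0 < y)
  by_cases hyρ : y < ρ <;> simp [invSqBelow, indicator, hyρ, hy, hy.ne']

lemma sq_mul_invPowFourAbove_eqOn (ρ : ℝ) :
    EqOn (fun y => y ^ 2 * invPowFourAbove ρ y) ((Ici ρ).indicator fun y => y ^ (-2 : ℝ))
      (Ioi 0) := by
  intro y (hy : 0 < y)
  by_cases hyρ : ρ ≤ y
  · simp [invPowFourAbove, hyρ]
    field_simp
  · simp [invPowFourAbove, hyρ]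

lemma integrable_invSqBelow_norm (ρ : ℝ) : Integrable fun z : E3 => invSqBelow ρ ‖z‖ := by
  refine integrable_fun_norm_E3 ?_
  rw [integrableOn_congr_fun (sq_mul_invSqBelow_eqOn ρ) measurableSet_Ioi]
  exact ((integrableOn_const (by simp)).integrable_indicator measurableSet_Ioo).integrableOn

lemma integral_invSqBelow_norm {ρ : ℝ} (hρ : 0 ≤ ρ) :
    ∫ z : E3, invSqBelow ρ ‖z‖ = 3 * volume.real (ball (0 : E3) 1) * ρ := by
  rw [integral_fun_norm_E3, setIntegral_congr_fun measurableSet_Ioi (sq_mul_invSqBelow_eqOn ρ),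
    setIntegral_indicator measurableSet_Ioo, inter_eq_right.2 Ioo_subset_Ioi_self]
  simp [hρ]

lemma integrable_invPowFourAbove_norm {ρ : ℝ} (hρ : 0 < ρ) :
    Integrable fun z : E3 => invPowFourAbove ρ ‖z‖ := by
  refine integrable_fun_norm_E3 ?_
  rw [integrableOn_congr_fun (sq_mul_invPowFourAbove_eqOn ρ) measurableSet_Ioi]
  have h : IntegrableOn (fun y : ℝ => y ^ (-2 : ℝ)) (Ici ρ) := by
    rw [integrableOn_Ici_iff_integrableOn_Ioi]
    exact integrableOn_Ioi_rpow_of_lt (by norm_num) hρ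
  exact (h.integrable_indicator measurableSet_Ici).integrableOn

lemma integral_invPowFourAbove_norm {ρ : ℝ} (hρ : 0 < ρ) :
    ∫ z : E3, invPowFourAbove ρ ‖z‖ = 3 * volume.real (ball (0 : E3) 1) * ρ⁻¹ := by
  rw [integral_fun_norm_E3,
    setIntegral_congr_fun measurableSet_Ioi (sq_mul_invPowFourAbove_eqOn ρ),
    setIntegral_indicator measurableSet_Ici, inter_eq_right.2 (Ici_subset_Ioi.2 hρ),
    integral_Ici_eq_integral_Ioi, integral_Ioi_rpow_of_lt (by norm_num) hρ]
  norm_num [Real.rpow_neg_one]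

/-- Split according to whether `z` is close to `0`, close to `ξ`, or far from both; in the last
region `‖ξ - z‖ ≥ max (‖ξ‖ / 2) (‖z‖ - ‖ξ‖) ≥ ‖z‖ / 3`. -/
lemma riesz_kernel_le {ξ : E3} (hξ : ξ ≠ 0) (z : E3) :
    (‖ξ - z‖ ^ 2)⁻¹ * (‖z‖ ^ 2)⁻¹ ≤
      ((‖ξ‖ / 2) ^ 2)⁻¹ * invSqBelow (‖ξ‖ / 2) ‖z‖ +
        ((‖ξ‖ / 2) ^ 2)⁻¹ * invSqBelow (‖ξ‖ / 2) ‖ξ - z‖ +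
          9 * invPowFourAbove (‖ξ‖ / 2) ‖z‖ := by
  set ρ := ‖ξ‖ / 2 with hρ_def
  have hρ : 0 < ρ := by positivity
  have htri : ‖ξ‖ ≤ ‖ξ - z‖ + ‖z‖ := norm_le_norm_sub_add ξ z
  have htri' : ‖z‖ ≤ ‖ξ - z‖ + ‖ξ‖ := by simpa [norm_sub_rev] using norm_le_norm_sub_add z ξ
  have h0 : ∀ y, 0 ≤ invSqBelow ρ y := fun y => indicator_nonneg (fun y _ => by positivity) y
  have h1 : ∀ y, 0 ≤ invPowFourAbove ρ y := fun y => indicator_nonneg (fun y _ => by positivity) y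
  have hA : 0 ≤ (ρ ^ 2)⁻¹ * invSqBelow ρ ‖z‖ := by have := h0 ‖z‖; positivity
  have hB : 0 ≤ (ρ ^ 2)⁻¹ * invSqBelow ρ ‖ξ - z‖ := by have := h0 ‖ξ - z‖; positivity
  have hC : 0 ≤ 9 * invPowFourAbove ρ ‖z‖ := by have := h1 ‖z‖; positivity
  rcases lt_or_ge ‖z‖ ρ with hz | hz
  · have hle : (‖ξ - z‖ ^ 2)⁻¹ ≤ (ρ ^ 2)⁻¹ := inv_anti₀ (by positivity) (by gcongr; linarith)
    have : (‖ξ - z‖ ^ 2)⁻¹ * (‖z‖ ^ 2)⁻¹ ≤ (ρ ^ 2)⁻¹ * invSqBelow ρ ‖z‖ := by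
      rw [invSqBelow, indicator_of_mem (mem_Iio.2 hz)]
      gcongr
    linarith
  rcases lt_or_ge ‖ξ - z‖ ρ with hξz | hξz
  · have hle : (‖z‖ ^ 2)⁻¹ ≤ (ρ ^ 2)⁻¹ := inv_anti₀ (by positivity) (by gcongr)
    have : (‖ξ - z‖ ^ 2)⁻¹ * (‖z‖ ^ 2)⁻¹ ≤ (ρ ^ 2)⁻¹ * invSqBelow ρ ‖ξ - z‖ := by
      rw [invSqBelow, indicator_of_mem (mem_Iio.2 hξz), mul_comm]
      gcongr
    linarith
  · have hz3 : ‖z‖ / 3 ≤ ‖ξ - z‖ := by linarith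
    have hz0 : 0 < ‖z‖ := hρ.trans_le hz
    have hle : (‖ξ - z‖ ^ 2)⁻¹ ≤ ((‖z‖ / 3) ^ 2)⁻¹ := inv_anti₀ (by positivity) (by gcongr)
    have : (‖ξ - z‖ ^ 2)⁻¹ * (‖z‖ ^ 2)⁻¹ ≤ 9 * invPowFourAbove ρ ‖z‖ := by
      rw [invPowFourAbove, indicator_of_mem (mem_Ici.2 hz)]
      calc (‖ξ - z‖ ^ 2)⁻¹ * (‖z‖ ^ 2)⁻¹ ≤ ((‖z‖ / 3) ^ 2)⁻¹ * (‖z‖ ^ 2)⁻¹ := by gcongr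
        _ = 9 * (‖z‖ ^ 4)⁻¹ := by ring
    linarith

/-- The three regions of `riesz_kernel_le` contribute `6`, `6` and `54` times
`volume (ball 0 1) / ‖ξ‖`. -/
def rieszConst : ℝ := 66 * volume.real (ball (0 : E3) 1)

lemma rieszConst_nonneg : 0 ≤ rieszConst := mul_nonneg (by norm_num) measureReal_nonneg

section RieszKernel

variable {ξ : E3}

lemma integrable_riesz_majorant (hξ : ξ ≠ 0) :
    Integrable fun z : E3 => ((‖ξ‖ / 2) ^ 2)⁻¹ * invSqBelow (‖ξ‖ / 2) ‖z‖ +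
        ((‖ξ‖ / 2) ^ 2)⁻¹ * invSqBelow (‖ξ‖ / 2) ‖ξ - z‖ +
          9 * invPowFourAbove (‖ξ‖ / 2) ‖z‖ := by
  have hρ : 0 < ‖ξ‖ / 2 := by positivity
  exact (((integrable_invSqBelow_norm _).const_mul _).add
    (((integrable_invSqBelow_norm _).comp_sub_left ξ).const_mul _)).add
    ((integrable_invPowFourAbove_norm hρ).const_mul _)

lemma integrable_riesz_kernel (hξ : ξ ≠ 0) :
    Integrable fun z : E3 => (‖ξ - z‖ ^ 2)⁻¹ * (‖z‖ ^ 2)⁻¹ := by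
  refine (integrable_riesz_majorant hξ).mono' (by fun_prop) (.of_forall fun z => ?_)
  rw [Real.norm_of_nonneg (by positivity)]
  exact riesz_kernel_le hξ z

lemma integral_riesz_kernel_le (hξ : ξ ≠ 0) :
    ∫ z : E3, (‖ξ - z‖ ^ 2)⁻¹ * (‖z‖ ^ 2)⁻¹ ≤ rieszConst / ‖ξ‖ := by
  refine (integral_mono (integrable_riesz_kernel hξ) (integrable_riesz_majorant hξ)
    (riesz_kernel_le hξ)).trans_eq ?_
  have hρ : 0 < ‖ξ‖ / 2 := by positivity
  have hA := (integrable_invSqBelow_norm (‖ξ‖ / 2)).const_mul ((‖ξ‖ / 2) ^ 2)⁻¹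
  have hB := ((integrable_invSqBelow_norm (‖ξ‖ / 2)).comp_sub_left ξ).const_mul ((‖ξ‖ / 2) ^ 2)⁻¹
  have hC := (integrable_invPowFourAbove_norm hρ).const_mul 9
  rw [integral_add (by exact hA.add hB) hC, integral_add hA hB, integral_const_mul,
    integral_const_mul, integral_const_mul, integral_sub_left_eq_self (fun z : E3 => invSqBelow (‖ξ‖ / 2) ‖z‖),
    integral_invSqBelow_norm hρ.le, integral_invPowFourAbove_norm hρ, rieszConst]
  field_simp
  ring

end RieszKernel

section Convolution

variable {ξ : E3} {p q : E3 → ℂ} {Mp Mq : ℝ}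

lemma ae_norm_mul_le_riesz_kernel (hbp : ∀ᵐ z : E3, ‖p z‖ ≤ Mp * (‖z‖ ^ 2)⁻¹)
    (hbq : ∀ᵐ z : E3, ‖q z‖ ≤ Mq * (‖z‖ ^ 2)⁻¹) :
    ∀ᵐ z : E3, ‖p (ξ - z) * q z‖ ≤ Mp * Mq * ((‖ξ - z‖ ^ 2)⁻¹ * (‖z‖ ^ 2)⁻¹) := by
  filter_upwards [(Measure.measurePreserving_sub_left volume ξ).quasiMeasurePreserving.ae hbp, hbq]
    with z hpz hqz
  rw [norm_mul]
  calc ‖p (ξ - z)‖ * ‖q z‖ ≤ (Mp * (‖ξ - z‖ ^ 2)⁻¹) * (Mq * (‖z‖ ^ 2)⁻¹) :=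
        mul_le_mul hpz hqz (norm_nonneg _) ((norm_nonneg _).trans hpz)
    _ = Mp * Mq * ((‖ξ - z‖ ^ 2)⁻¹ * (‖z‖ ^ 2)⁻¹) := by ring

lemma integrable_conv_integrand (hp : AEStronglyMeasurable p) (hq : AEStronglyMeasurable q)
    (hbp : ∀ᵐ z : E3, ‖p z‖ ≤ Mp * (‖z‖ ^ 2)⁻¹) (hbq : ∀ᵐ z : E3, ‖q z‖ ≤ Mq * (‖z‖ ^ 2)⁻¹)
    (hξ : ξ ≠ 0) : Integrable fun z : E3 => p (ξ - z) * q z :=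
  ((integrable_riesz_kernel hξ).const_mul (Mp * Mq)).mono'
    ((hp.comp_measurePreserving (Measure.measurePreserving_sub_left volume ξ)).mul hq)
    (ae_norm_mul_le_riesz_kernel hbp hbq)

lemma norm_integral_conv_le (hMp : 0 ≤ Mp) (hMq : 0 ≤ Mq)
    (hbp : ∀ᵐ z : E3, ‖p z‖ ≤ Mp * (‖z‖ ^ 2)⁻¹) (hbq : ∀ᵐ z : E3, ‖q z‖ ≤ Mq * (‖z‖ ^ 2)⁻¹)
    (hξ : ξ ≠ 0) : ‖∫ z : E3, p (ξ - z) * q z‖ ≤ Mp * Mq * (rieszConst / ‖ξ‖) := by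
  refine (norm_integral_le_of_norm_le ((integrable_riesz_kernel hξ).const_mul (Mp * Mq))
    (ae_norm_mul_le_riesz_kernel hbp hbq)).trans ?_
  rw [integral_const_mul]
  exact mul_le_mul_of_nonneg_left (integral_riesz_kernel_le hξ) (mul_nonneg hMp hMq)

end Convolution

section Bilinear

variable {ξ : E3} {U V v w : E3 → V3} {MU MV Mv Mw d : ℝ}

lemma ae_norm_apply_le {M : ℝ} (hbv : ∀ᵐ z : E3, ‖v z‖ ≤ M * (‖z‖ ^ 2)⁻¹)
    (j : Fin 3) : ∀ᵐ z : E3, ‖v z j‖ ≤ M * (‖z‖ ^ 2)⁻¹ := by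
  filter_upwards [hbv] with z hz using (norm_le_pi_norm _ j).trans hz

lemma integrable_Wconv_integrand (hv : Measurable v) (hw : Measurable w)
    (hbv : ∀ᵐ z : E3, ‖v z‖ ≤ Mv * (‖z‖ ^ 2)⁻¹) (hbw : ∀ᵐ z : E3, ‖w z‖ ≤ Mw * (‖z‖ ^ 2)⁻¹)
    (hξ : ξ ≠ 0) (j k : Fin 3) : Integrable fun z => v (ξ - z) j * w z k :=
  integrable_conv_integrand ((measurable_pi_apply j).comp hv).aestronglyMeasurable
    ((measurable_pi_apply k).comp hw).aestronglyMeasurable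
    (ae_norm_apply_le hbv j) (ae_norm_apply_le hbw k) hξ

lemma norm_Wconv_le (hMv : 0 ≤ Mv) (hMw : 0 ≤ Mw)
    (hbv : ∀ᵐ z : E3, ‖v z‖ ≤ Mv * (‖z‖ ^ 2)⁻¹) (hbw : ∀ᵐ z : E3, ‖w z‖ ≤ Mw * (‖z‖ ^ 2)⁻¹)
    (hξ : ξ ≠ 0) (j k : Fin 3) :
    ‖Wconv v w ξ j k‖ ≤ Mv * Mw * (rieszConst / ‖ξ‖) := by
  have hc : ((2 * Real.pi) ^ ((3 : ℝ) / 2))⁻¹ ≤ 1 :=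
    inv_le_one_of_one_le₀ (Real.one_le_rpow (by linarith [Real.pi_gt_three]) (by norm_num))
  rw [Wconv, norm_smul, Real.norm_of_nonneg (by positivity)]
  exact (mul_le_of_le_one_left (norm_nonneg _) hc).trans
    (norm_integral_conv_le hMv hMw (ae_norm_apply_le hbv j) (ae_norm_apply_le hbw k) hξ)

lemma ixW_zero (v w : E3 → V3) : ixW v w 0 = 0 := by
  ext j
  simp [ixW]

lemma norm_ixW_le (hMv : 0 ≤ Mv) (hMw : 0 ≤ Mw)
    (hbv : ∀ᵐ z : E3, ‖v z‖ ≤ Mv * (‖z‖ ^ 2)⁻¹) (hbw : ∀ᵐ z : E3, ‖w z‖ ≤ Mw * (‖z‖ ^ 2)⁻¹)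
    (ξ : E3) : ‖ixW v w ξ‖ ≤ 3 * rieszConst * Mv * Mw := by
  have hC := rieszConst_nonneg
  rcases eq_or_ne ξ 0 with rfl | hξ
  · rw [ixW_zero, norm_zero]
    positivity
  refine (pi_norm_le_iff_of_nonneg (by positivity)).2 fun j => ?_
  calc ‖ixW v w ξ j‖ ≤ ∑ k : Fin 3, ‖Complex.I * (ξ k : ℂ) * Wconv v w ξ j k‖ := norm_sum_le _ _
    _ ≤ ∑ _k : Fin 3, ‖ξ‖ * (Mv * Mw * (rieszConst / ‖ξ‖)) := by
        gcongr with k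
        rw [norm_mul, norm_mul, Complex.norm_I, one_mul, Complex.norm_real]
        exact mul_le_mul (PiLp.norm_apply_le ξ k) (norm_Wconv_le hMv hMw hbv hbw hξ j k)
          (norm_nonneg _) (norm_nonneg _)
    _ = 3 * rieszConst * Mv * Mw := by
        simp only [Finset.sum_const, Finset.card_univ, Fintype.card_fin]
        field_simp
        ring

lemma ixW_sub_ixW (hU : Measurable U) (hV : Measurable V)
    (hbU : ∀ᵐ z : E3, ‖U z‖ ≤ MU * (‖z‖ ^ 2)⁻¹) (hbV : ∀ᵐ z : E3, ‖V z‖ ≤ MV * (‖z‖ ^ 2)⁻¹)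
    (ξ : E3) : ixW U U ξ - ixW V V ξ = ixW (U - V) U ξ + ixW V (U - V) ξ := by
  rcases eq_or_ne ξ 0 with rfl | hξ
  · simp [ixW_zero]
  have hbUV : ∀ᵐ z : E3, ‖(U - V) z‖ ≤ (MU + MV) * (‖z‖ ^ 2)⁻¹ := by
    filter_upwards [hbU, hbV] with z hUz hVz
    rw [Pi.sub_apply, add_mul]
    linarith [norm_sub_le (U z) (V z)]
  ext j
  simp only [ixW, Pi.sub_apply, Pi.add_apply, ← Finset.sum_sub_distrib, ← Finset.sum_add_distrib,
    ← mul_sub, ← mul_add]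
  refine Finset.sum_congr rfl fun k _ => congrArg _ ?_
  simp only [Wconv, ← smul_sub, ← smul_add]
  rw [← integral_sub (integrable_Wconv_integrand hU hU hbU hbU hξ j k)
      (integrable_Wconv_integrand hV hV hbV hbV hξ j k),
    ← integral_add (integrable_Wconv_integrand (hU.sub hV) hU hbUV hbU hξ j k)
      (integrable_Wconv_integrand hV (hU.sub hV) hbV hbUV hξ j k)]
  congr 2 with z
  simp only [Pi.sub_apply]
  ring

lemma norm_LerayP_apply_le (ξ : E3) (j k : Fin 3) : ‖LerayP ξ j k‖ ≤ 2 := by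
  have hδ : ‖if j = k then (1 : ℂ) else 0‖ ≤ 1 := by split_ifs <;> simp
  have hξξ : ‖(ξ j : ℂ) * (ξ k : ℂ) / (‖ξ‖ : ℂ) ^ 2‖ ≤ 1 := by
    rw [norm_div, norm_mul, norm_pow, Complex.norm_real, Complex.norm_real, Complex.norm_real,
      norm_norm, sq]
    exact div_le_one_of_le₀ (mul_le_mul (PiLp.norm_apply_le ξ j) (PiLp.norm_apply_le ξ k)
      (norm_nonneg _) (norm_nonneg _)) (by positivity)
  exact (norm_sub_le _ _).trans (by linarith)

lemma norm_LerayP_mulVec_le (ξ : E3) (w : V3) : ‖(LerayP ξ).mulVec w‖ ≤ 6 * ‖w‖ := by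
  refine (pi_norm_le_iff_of_nonneg (by positivity)).2 fun j => ?_
  calc ‖(LerayP ξ).mulVec w j‖ ≤ ∑ k : Fin 3, ‖LerayP ξ j k * w k‖ :=
        norm_sum_le (Finset.univ) fun k => LerayP ξ j k * w k
    _ ≤ ∑ _k : Fin 3, 2 * ‖w‖ := by
        gcongr with k
        rw [norm_mul]
        exact mul_le_mul (norm_LerayP_apply_le ξ j k) (norm_le_pi_norm w k) (norm_nonneg _)
          (by norm_num)
    _ = 6 * ‖w‖ := by
        simp only [Finset.sum_const, Finset.card_univ, Fintype.card_fin]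
        ring

lemma norm_LerayP_mulVec_ixW_sub_le (hU : Measurable U) (hV : Measurable V)
    (hMU : 0 ≤ MU) (hMV : 0 ≤ MV) (hd : 0 ≤ d)
    (hbU : ∀ᵐ z : E3, ‖U z‖ ≤ MU * (‖z‖ ^ 2)⁻¹) (hbV : ∀ᵐ z : E3, ‖V z‖ ≤ MV * (‖z‖ ^ 2)⁻¹)
    (hbd : ∀ᵐ z : E3, ‖(U - V) z‖ ≤ d * (‖z‖ ^ 2)⁻¹) (ξ : E3) :
    ‖(LerayP ξ).mulVec (ixW U U ξ - ixW V V ξ)‖ ≤ 18 * rieszConst * (MU + MV) * d := by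
  rw [ixW_sub_ixW hU hV hbU hbV]
  calc ‖(LerayP ξ).mulVec (ixW (U - V) U ξ + ixW V (U - V) ξ)‖
      ≤ 6 * (3 * rieszConst * d * MU + 3 * rieszConst * MV * d) :=
        (norm_LerayP_mulVec_le ξ _).trans (by
          gcongr
          exact (norm_add_le _ _).trans (add_le_add (norm_ixW_le hd hMU hbd hbU ξ)
            (norm_ixW_le hMV hd hbV hbd ξ)))
    _ = 18 * rieszConst * (MU + MV) * d := by ring

end Bilinear

section HeatDuhamel

lemma mul_integral_exp_neg_mul (a T t : ℝ) :
    a * ∫ τ in T..t, Real.exp (-(t - τ) * a) = 1 - Real.exp (-(t - T) * a) := by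
  have hderiv (τ : ℝ) : HasDerivAt (fun s => Real.exp (-(t - s) * a))
      (Real.exp (-(t - τ) * a) * a) τ := by
    simpa using (((hasDerivAt_id τ).const_sub t).neg.mul_const a).exp
  rw [mul_comm, ← intervalIntegral.integral_mul_const,
    intervalIntegral.integral_eq_sub_of_hasDerivAt (fun τ _ => hderiv τ)
      (Continuous.intervalIntegrable (by fun_prop) _ _)]
  simp

lemma mul_exp_neg_mul_le_inv {s : ℝ} (hs : 0 < s) (a : ℝ) : a * Real.exp (-s * a) ≤ s⁻¹ := by
  rw [inv_eq_one_div, le_div_iff₀ hs]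
  calc a * Real.exp (-s * a) * s = s * a * Real.exp (-(s * a)) := by rw [neg_mul]; ring
    _ ≤ Real.exp (-1) := Real.mul_exp_neg_le_exp_neg_one _
    _ ≤ 1 := Real.exp_le_one_iff.2 (by norm_num)

variable {E : Type*} [NormedAddCommGroup E] [NormedSpace ℝ E]

lemma norm_heat_integral_le {g : ℝ → E} {a M ε T t : ℝ} (ha : 0 ≤ a) (hT : 0 < T) (hTt : T < t)
    (hg : IntervalIntegrable (fun τ => Real.exp (-(t - τ) * a) • g τ) volume 0 t)
    (hM : ∀ τ ∈ Ioc 0 T, ‖g τ‖ ≤ M) (hε : ∀ τ ∈ Ioc T t, ‖g τ‖ ≤ ε) :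
    a * ‖∫ τ in (0 : ℝ)..t, Real.exp (-(t - τ) * a) • g τ‖ ≤ M * T / (t - T) + ε := by
  have hM0 : 0 ≤ M := (norm_nonneg _).trans (hM T ⟨hT, le_rfl⟩)
  have hε0 : 0 ≤ ε := (norm_nonneg _).trans (hε t ⟨hTt, le_rfl⟩)
  have hearly : ‖∫ τ in (0 : ℝ)..T, Real.exp (-(t - τ) * a) • g τ‖ ≤
      Real.exp (-(t - T) * a) * M * T := by
    refine (intervalIntegral.norm_integral_le_of_norm_le_const fun τ hτ => ?_).trans_eq
      (by rw [sub_zero, abs_of_pos hT])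
    rw [uIoc_of_le hT.le] at hτ
    rw [norm_smul, Real.norm_of_nonneg (Real.exp_pos _).le]
    exact mul_le_mul (Real.exp_le_exp.2 (by nlinarith [hτ.2])) (hM τ hτ) (norm_nonneg _)
      (Real.exp_pos _).le
  have hlate : ‖∫ τ in T..t, Real.exp (-(t - τ) * a) • g τ‖ ≤
      ε * ∫ τ in T..t, Real.exp (-(t - τ) * a) := by
    rw [← intervalIntegral.integral_const_mul]
    refine intervalIntegral.norm_integral_le_of_norm_le hTt.le (.of_forall fun τ hτ => ?_)
      (Continuous.intervalIntegrable (by fun_prop) _ _)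
    rw [norm_smul, Real.norm_of_nonneg (Real.exp_pos _).le, mul_comm]
    exact mul_le_mul_of_nonneg_right (hε τ hτ) (Real.exp_pos _).le
  have hTmem : T ∈ uIcc 0 t := by
    rw [uIcc_of_le (by linarith)]
    exact ⟨hT.le, hTt.le⟩
  rw [← intervalIntegral.integral_add_adjacent_intervals
    (hg.mono_set (uIcc_subset_uIcc_left hTmem)) (hg.mono_set (uIcc_subset_uIcc_right hTmem))]
  have hsplit := mul_le_mul_of_nonneg_left ((norm_add_le _ _).trans (add_le_add hearly hlate)) ha
  have hdecay := mul_exp_neg_mul_le_inv (sub_pos.2 hTt) a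
  have hmass := mul_integral_exp_neg_mul a T t
  have hexp := (Real.exp_pos (-(t - T) * a)).le
  calc _ ≤ M * T * (a * Real.exp (-(t - T) * a)) +
        ε * (a * ∫ τ in T..t, Real.exp (-(t - τ) * a)) :=
        hsplit.trans_eq (by ring)
    _ ≤ M * T * (t - T)⁻¹ + ε * 1 := by
        gcongr
        linarith
    _ = M * T / (t - T) + ε := by ring

end HeatDuhamel

section PMnorm

variable {a : ℝ} {f g h : E3 → V3}

lemma PMnorm_le_add (hfg : ∀ᵐ ξ : E3, ‖h ξ‖ ≤ ‖f ξ‖ + ‖g ξ‖) :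
    PMnorm a h ≤ PMnorm a f + PMnorm a g := by
  refine essSup_le_of_ae_le _ ?_
  filter_upwards [hfg, ENNReal.ae_le_essSup fun ξ : E3 => ENNReal.ofReal (‖ξ‖ ^ a * ‖f ξ‖),
    ENNReal.ae_le_essSup fun ξ : E3 => ENNReal.ofReal (‖ξ‖ ^ a * ‖g ξ‖)] with ξ hξ hf hg
  calc ENNReal.ofReal (‖ξ‖ ^ a * ‖h ξ‖)
      ≤ ENNReal.ofReal (‖ξ‖ ^ a * ‖f ξ‖ + ‖ξ‖ ^ a * ‖g ξ‖) := by
        rw [← mul_add]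
        gcongr
    _ ≤ ENNReal.ofReal (‖ξ‖ ^ a * ‖f ξ‖) + ENNReal.ofReal (‖ξ‖ ^ a * ‖g ξ‖) :=
        ENNReal.ofReal_add_le
    _ ≤ PMnorm a f + PMnorm a g := add_le_add hf hg

lemma ae_norm_le_of_PMnorm_ne_top (hg : PMnorm a g ≠ ⊤) :
    ∀ᵐ z : E3, ‖g z‖ ≤ (PMnorm a g).toReal * (‖z‖ ^ a)⁻¹ := by
  filter_upwards [ENNReal.ae_le_essSup fun ξ : E3 => ENNReal.ofReal (‖ξ‖ ^ a * ‖g ξ‖),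
    Measure.ae_ne volume 0] with z hz hz0
  have hpos : 0 < ‖z‖ ^ a := Real.rpow_pos_of_pos (norm_pos_iff.2 hz0) a
  rw [← div_eq_mul_inv, le_div_iff₀ hpos, mul_comm]
  exact (ENNReal.ofReal_le_iff_le_toReal hg).1 hz

lemma tendsto_PMnorm_nhds_zero {α : Type*} {l : Filter α} {g : α → E3 → V3}
    (hg : ∀ ε > 0, ∀ᶠ t in l, ∀ᵐ ξ : E3, ‖ξ‖ ^ a * ‖g t ξ‖ ≤ ε) :
    Tendsto (fun t => PMnorm a (g t)) l (nhds 0) := by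
  refine ENNReal.tendsto_nhds_zero.2 fun ε hε => ?_
  rcases eq_or_ne ε ⊤ with rfl | hε_top
  · exact .of_forall fun _ => le_top
  filter_upwards [hg ε.toReal (ENNReal.toReal_pos hε.ne' hε_top)] with t ht
  refine essSup_le_of_ae_le _ ?_
  filter_upwards [ht] with ξ hξ
  exact ENNReal.ofReal_le_of_le_toReal hξ

lemma PMnorm_le_supPM (u : E3 → ℝ → V3) {t : ℝ} (ht : 0 ≤ t) :
    PMnorm a (fun ξ => u ξ t) ≤ supPM a u :=
  le_iSup₂ (f := fun (s : ℝ) (_ : 0 ≤ s) => PMnorm a fun ξ => u ξ s) t ht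

lemma toReal_PMnorm_sub_le {u v : E3 → ℝ → V3} (hub : supPM a u ≠ ⊤) (hvb : supPM a v ≠ ⊤)
    {t : ℝ} (ht : 0 ≤ t) :
    (PMnorm a fun ξ => u ξ t - v ξ t).toReal ≤ (supPM a u).toReal + (supPM a v).toReal := by
  rw [← ENNReal.toReal_add hub hvb]
  exact ENNReal.toReal_mono (ENNReal.add_ne_top.2 ⟨hub, hvb⟩)
    ((PMnorm_le_add (.of_forall fun ξ => norm_sub_le (u ξ t) (v ξ t))).trans
      (add_le_add (PMnorm_le_supPM u ht) (PMnorm_le_supPM v ht)))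

end PMnorm

lemma norm_LerayP_mulVec_ixW_sub_le_PMnorm {U V : E3 → V3} (hU : Measurable U)
    (hV : Measurable V) (hUf : PMnorm 2 U ≠ ⊤) (hVf : PMnorm 2 V ≠ ⊤) (ξ : E3) :
    ‖(LerayP ξ).mulVec (ixW U U ξ - ixW V V ξ)‖ ≤
      18 * rieszConst * ((PMnorm 2 U).toReal + (PMnorm 2 V).toReal) *
        (PMnorm 2 (U - V)).toReal := by
  have hUVf : PMnorm 2 (U - V) ≠ ⊤ :=
    ne_top_of_le_ne_top (ENNReal.add_ne_top.2 ⟨hUf, hVf⟩)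
      (PMnorm_le_add (.of_forall fun ξ => norm_sub_le (U ξ) (V ξ)))
  have hbound {W : E3 → V3} (hW : PMnorm 2 W ≠ ⊤) :
      ∀ᵐ z : E3, ‖W z‖ ≤ (PMnorm 2 W).toReal * (‖z‖ ^ 2)⁻¹ := by
    simpa only [Real.rpow_two] using ae_norm_le_of_PMnorm_ne_top hW
  exact norm_LerayP_mulVec_ixW_sub_le hU hV ENNReal.toReal_nonneg ENNReal.toReal_nonneg
    ENNReal.toReal_nonneg (hbound hUf) (hbound hVf) (hbound hUVf) ξ

lemma norm_LerayP_mulVec_ixW_sub_le_supPM {u v : E3 → ℝ → V3} {t : ℝ}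
    (hu : Measurable fun ξ => u ξ t) (hv : Measurable fun ξ => v ξ t)
    (hub : supPM 2 u ≠ ⊤) (hvb : supPM 2 v ≠ ⊤) (ht : 0 ≤ t) (ξ : E3) :
    ‖(LerayP ξ).mulVec (ixW (fun ζ => u ζ t) (fun ζ => u ζ t) ξ -
        ixW (fun ζ => v ζ t) (fun ζ => v ζ t) ξ)‖ ≤
      18 * rieszConst * ((supPM 2 u).toReal + (supPM 2 v).toReal) *
        (PMnorm 2 fun ξ => u ξ t - v ξ t).toReal := by
  refine (norm_LerayP_mulVec_ixW_sub_le_PMnorm hu hv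
    (ne_top_of_le_ne_top hub (PMnorm_le_supPM u ht))
    (ne_top_of_le_ne_top hvb (PMnorm_le_supPM v ht)) ξ).trans ?_
  refine mul_le_mul_of_nonneg_right (mul_le_mul_of_nonneg_left ?_ ?_) ENNReal.toReal_nonneg
  · exact add_le_add (ENNReal.toReal_mono hub (PMnorm_le_supPM u ht))
      (ENNReal.toReal_mono hvb (PMnorm_le_supPM v ht))
  · exact mul_nonneg (by norm_num) rieszConst_nonneg

namespace IsMildSolution

variable {u0 v0 : E3 → V3} {F G u v : E3 → ℝ → V3}

lemma measurable_apply (hu : IsMildSolution u0 F u) (τ : ℝ) : Measurable fun ξ => u ξ τ :=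
  hu.1.comp (measurable_id.prodMk measurable_const)

lemma Bterm_sub_Bterm (hu : IsMildSolution u0 F u) (hv : IsMildSolution v0 G v) {t : ℝ}
    (ht : 0 ≤ t) : ∀ᵐ ξ : E3, Bterm u u ξ t - Bterm v v ξ t =
      ∫ τ in (0 : ℝ)..t, Real.exp (-(t - τ) * ‖ξ‖ ^ 2) • (LerayP ξ).mulVec
        (ixW (fun ζ => u ζ τ) (fun ζ => u ζ τ) ξ - ixW (fun ζ => v ζ τ) (fun ζ => v ζ τ) ξ) := by
  filter_upwards [hu.2 t ht, hv.2 t ht] with ξ ⟨_, hBu, _⟩ ⟨_, hBv, _⟩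
  rw [Bterm, Bterm, ← intervalIntegral.integral_sub hBu hBv]
  simp only [Matrix.mulVec_sub, smul_sub]

lemma heat_add_Fterm_sub (hu : IsMildSolution u0 F u) (hv : IsMildSolution v0 G v) {t : ℝ}
    (ht : 0 ≤ t) : ∀ᵐ ξ : E3,
      Real.exp (-t * ‖ξ‖ ^ 2) • (u0 ξ - v0 ξ) + Fterm (fun ζ τ => F ζ τ - G ζ τ) ξ t =
        (u ξ t - v ξ t) + (Bterm u u ξ t - Bterm v v ξ t) := by
  filter_upwards [hu.2 t ht, hv.2 t ht] with ξ ⟨_, _, hFu, hu_eq⟩ ⟨_, _, hFv, hv_eq⟩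
  have hF : Fterm (fun ζ τ => F ζ τ - G ζ τ) ξ t = Fterm F ξ t - Fterm G ξ t := by
    rw [Fterm, Fterm, Fterm, ← intervalIntegral.integral_sub hFu hFv]
    simp only [Matrix.mulVec_sub, smul_sub]
  rw [hF, hu_eq, hv_eq, smul_sub]
  abel

end IsMildSolution

theorem tendsto_PMnorm_Bterm_sub_Bterm {u0 v0 : E3 → V3} {F G u v : E3 → ℝ → V3}
    (hu : IsMildSolution u0 F u) (hv : IsMildSolution v0 G v)
    (hub : supPM 2 u ≠ ⊤) (hvb : supPM 2 v ≠ ⊤)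
    (hconv : Tendsto (fun t : ℝ => PMnorm 2 (fun ξ => u ξ t - v ξ t)) atTop (nhds 0)) :
    Tendsto (fun t : ℝ => PMnorm 2 (fun ξ => Bterm u u ξ t - Bterm v v ξ t)) atTop (nhds 0) := by
  set M := (supPM 2 u).toReal + (supPM 2 v).toReal
  set D : ℝ → ℝ := fun τ => (PMnorm 2 fun ξ => u ξ τ - v ξ τ).toReal
  set K := 18 * rieszConst * M
  have hK : 0 ≤ K := by have := rieszConst_nonneg; positivity
  have hforce {τ : ℝ} (hτ : 0 ≤ τ) (ξ : E3) :
      ‖(LerayP ξ).mulVec (ixW (fun ζ => u ζ τ) (fun ζ => u ζ τ) ξ -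
        ixW (fun ζ => v ζ τ) (fun ζ => v ζ τ) ξ)‖ ≤ K * D τ :=
    norm_LerayP_mulVec_ixW_sub_le_supPM (hu.measurable_apply τ) (hv.measurable_apply τ) hub hvb
      hτ ξ
  have hD : Tendsto (fun τ => K * D τ) atTop (nhds 0) := by
    simpa using ((ENNReal.tendsto_toReal ENNReal.zero_ne_top).comp hconv).const_mul K
  refine tendsto_PMnorm_nhds_zero fun ε hε => ?_
  obtain ⟨T₀, hT₀⟩ := eventually_atTop.1 ((tendsto_order.1 hD).2 (ε / 2) (half_pos hε))
  set T := max T₀ 1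
  have hT : 0 < T := zero_lt_one.trans_le (le_max_right _ _)
  filter_upwards [eventually_gt_atTop T, eventually_ge_atTop (T + 2 * (K * M * T) / ε)]
    with t hTt htε
  have ht : 0 ≤ t := hT.le.trans hTt.le
  have hfirst : K * M * T / (t - T) ≤ ε / 2 := by
    rw [div_le_iff₀ (sub_pos.2 hTt)]
    calc K * M * T = ε / 2 * (2 * (K * M * T) / ε) := by field_simp
      _ ≤ ε / 2 * (t - T) := by gcongr; linarith
  filter_upwards [hu.Bterm_sub_Bterm hv ht, hu.2 t ht, hv.2 t ht]
    with ξ hB ⟨_, hBu, _⟩ ⟨_, hBv, _⟩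
  rw [Real.rpow_two, hB]
  refine (norm_heat_integral_le (M := K * M) (ε := ε / 2) (sq_nonneg ‖ξ‖) hT hTt ?_
    (fun τ hτ => ?_) (fun τ hτ => ?_)).trans (by linarith)
  · simpa only [Matrix.mulVec_sub, smul_sub] using hBu.sub hBv
  · exact (hforce hτ.1.le ξ).trans
      (mul_le_mul_of_nonneg_left (toReal_PMnorm_sub_le hub hvb hτ.1.le) hK)
  · exact (hforce (hT.le.trans hτ.1.le) ξ).trans (hT₀ τ ((le_max_left _ _).trans hτ.1.le)).le

/-- **Necessary condition for asymptotic equivalence of two solutions:** if two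
bounded mild solutions satisfy `‖u(t)−v(t)‖_{PM²} → 0`, then
`‖S(t)(u₀−v₀) + ∫₀ᵗ S(t−τ)P(F(τ)−G(τ))dτ‖_{PM²} → 0` as `t → ∞`. -/
theorem asymptotic_stability_necessary
    (u0 v0 : E3 → V3) (F G : E3 → ℝ → V3) (u v : E3 → ℝ → V3)
    (hu : IsMildSolution u0 F u) (hv : IsMildSolution v0 G v)
    (hub : supPM 2 u ≠ ⊤) (hvb : supPM 2 v ≠ ⊤)
    (hconv : Tendsto (fun t : ℝ => PMnorm 2 (fun ξ => u ξ t - v ξ t)) atTop (nhds 0)) :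
    Tendsto (fun t : ℝ =>
        PMnorm 2 (fun ξ => Real.exp (-t * ‖ξ‖ ^ 2) • (u0 ξ - v0 ξ) +
          Fterm (fun ζ τ => F ζ τ - G ζ τ) ξ t)) atTop (nhds 0) := by
  refine tendsto_of_tendsto_of_tendsto_of_le_of_le' tendsto_const_nhds
    (by simpa using hconv.add (tendsto_PMnorm_Bterm_sub_Bterm hu hv hub hvb hconv))
    (.of_forall fun _ => zero_le) ?_
  filter_upwards [eventually_ge_atTop 0] with t ht
  refine PMnorm_le_add ?_
  filter_upwards [hu.heat_add_Fterm_sub hv ht] with ξ hξ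
  rw [hξ]
  exact norm_add_le _ _
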